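/- arXiv:1208.6562 — 7 statements merged into one kernel-verified Lean document; each statement's English description precedes it below -/
import Mathlib

section
/- Let u be a C² solution on [0,R) of u'' + ((N-1)/r) u' = f(u) - g(u') with u(0) = u₀ > 0, u'(0) = 0, where f, g are continuous increasing with f(0)=g(0)=0, f > 0 on (0,∞), and N ≥ 1. Then u'' (r) ≥ 0 for all r ∈ (0,R); in particular u' is nondecreasing and u(r) ≤ u₀ + R·u'(r) for all r ∈ (0,R). -/
open MeasureTheory Filter Topology

/-- For a `C²` solution on `[0,R)` of `u'' + ((N-1)/r) u' = f(u) - g(u')`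
with `u 0 = u₀ > 0`, `u' 0 = 0`, and `u' > 0` on `(0,R)`, one has `u'' ≥ 0`
on `(0,R)`, and `u r ≤ u₀ + R · u' r` for all `r ∈ (0,R)`. -/
theorem stmt_6 (f g : ℝ → ℝ) (N : ℝ) (hN : 1 ≤ N)
    (hfc : ContinuousOn f (Set.Ici 0)) (hgc : ContinuousOn g (Set.Ici 0))
    (hfmono : StrictMonoOn f (Set.Ici 0)) (hgmono : StrictMonoOn g (Set.Ici 0))
    (hf0 : f 0 = 0) (hg0 : g 0 = 0)
    (hfpos : ∀ s, 0 < s → 0 < f s)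
    (R u₀ : ℝ) (hR : 0 < R) (hu₀ : 0 < u₀)
    (u u' u'' : ℝ → ℝ)
    (hu' : ∀ r ∈ Set.Ico 0 R, HasDerivAt u (u' r) r)
    (hu'' : ∀ r ∈ Set.Ico 0 R, HasDerivAt u' (u'' r) r)
    (hu''c : ContinuousOn u'' (Set.Ico 0 R))
    (heq : ∀ r ∈ Set.Ioo 0 R, u'' r + ((N - 1) / r) * u' r = f (u r) - g (u' r))
    (hinit : u 0 = u₀) (hinit' : u' 0 = 0)
    (hu'pos : ∀ r ∈ Set.Ioo 0 R, 0 < u' r) :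
    (∀ r ∈ Set.Ioo 0 R, 0 ≤ u'' r) ∧
      (∀ r ∈ Set.Ioo 0 R, u r ≤ u₀ + R * u' r) := by

  have hu'nn : ∀ r ∈ Set.Ico 0 R, 0 ≤ u' r := by
    rintro r ⟨hr0, hrR⟩
    rcases eq_or_lt_of_le hr0 with h | h
    · simp [← h, hinit']
    · exact (hu'pos r ⟨h, hrR⟩).le
  have hucont : ContinuousOn u (Set.Ico 0 R) :=
    fun r hr => ((hu' r hr).continuousAt).continuousWithinAt
  have hu'cont : ContinuousOn u' (Set.Ico 0 R) :=
    fun r hr => ((hu'' r hr).continuousAt).continuousWithinAt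
  have hsub : ∀ a b : ℝ, 0 ≤ a → b < R → Set.Icc a b ⊆ Set.Ico 0 R := by
    intro a b ha hb x hx
    exact ⟨ha.trans hx.1, lt_of_le_of_lt hx.2 hb⟩
  have mvt_u : ∀ a b : ℝ, 0 ≤ a → a < b → b < R →
      ∃ c ∈ Set.Ioo a b, u' c = (u b - u a) / (b - a) := by
    intro a b ha hab hbR
    exact exists_hasDerivAt_eq_slope u u' hab (hucont.mono (hsub a b ha hbR))
      (fun x hx => hu' x ⟨ha.trans hx.1.le, hx.2.trans hbR⟩)
  have mvt_u' : ∀ a b : ℝ, 0 ≤ a → a < b → b < R →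
      ∃ c ∈ Set.Ioo a b, u'' c = (u' b - u' a) / (b - a) := by
    intro a b ha hab hbR
    exact exists_hasDerivAt_eq_slope u' u'' hab (hu'cont.mono (hsub a b ha hbR))
      (fun x hx => hu'' x ⟨ha.trans hx.1.le, hx.2.trans hbR⟩)
  -- u is nondecreasing
  have humono : ∀ a b : ℝ, 0 ≤ a → a < b → b < R → u a ≤ u b := by
    intro a b ha hab hbR
    obtain ⟨c, hc, hceq⟩ := mvt_u a b ha hab hbR
    have hc' : 0 ≤ u' c := hu'nn c ⟨ha.trans hc.1.le, hc.2.trans hbR⟩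
    rw [hceq] at hc'
    have := (div_nonneg_iff.mp hc')
    rcases this with ⟨h1, _⟩ | ⟨_, h2⟩
    · linarith
    · nlinarith [hc.1, hc.2, hab]
  have hupos : ∀ r ∈ Set.Ioo 0 R, (0:ℝ) ≤ u r := by
    intro r hr
    have := humono 0 r le_rfl hr.1 hr.2
    rw [hinit] at this; linarith
  -- u'' 0 ≥ 0
  have h0 : 0 ≤ u'' 0 := by
    have hd0 : HasDerivAt u' (u'' 0) 0 := hu'' 0 ⟨le_rfl, hR⟩
    have ht : Tendsto (slope u' 0) (𝓝[≠] (0:ℝ)) (𝓝 (u'' 0)) :=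
      hasDerivAt_iff_tendsto_slope.mp hd0
    have ht2 : Tendsto (slope u' 0) (𝓝[>] (0:ℝ)) (𝓝 (u'' 0)) :=
      ht.mono_left (nhdsWithin_mono _ (fun x hx => ne_of_gt hx))
    refine ge_of_tendsto ht2 ?_
    filter_upwards [Ioo_mem_nhdsGT_of_mem (Set.mem_Ico.mpr ⟨le_rfl, hR⟩)] with x hx
    rw [slope_def_field, hinit']
    have h1 := (hu'pos x hx).le
    have hx0 : (0:ℝ) < x := hx.1
    apply div_nonneg <;> linarith
  have part1 : ∀ r ∈ Set.Ioo 0 R, 0 ≤ u'' r := by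
    by_contra hcon
    push_neg at hcon
    obtain ⟨r₁, hr₁, hneg⟩ := hcon
    set S : Set ℝ := Set.Icc 0 r₁ ∩ u'' ⁻¹' (Set.Ici 0) with hSdef
    have hIccsub : Set.Icc (0:ℝ) r₁ ⊆ Set.Ico 0 R := hsub 0 r₁ le_rfl hr₁.2
    have hS0 : (0:ℝ) ∈ S := ⟨⟨le_rfl, hr₁.1.le⟩, h0⟩
    have hScl : IsClosed S :=
      (hu''c.mono hIccsub).preimage_isClosed_of_isClosed isClosed_Icc isClosed_Ici
    have hScomp : IsCompact S :=
      isCompact_Icc.of_isClosed_subset hScl Set.inter_subset_left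
    have haS : sSup S ∈ S := hScomp.sSup_mem ⟨0, hS0⟩
    set a := sSup S with hadef
    have ha0 : 0 ≤ a := haS.1.1
    have har₁ : a ≤ r₁ := haS.1.2
    have hau'' : 0 ≤ u'' a := haS.2
    have halt : a < r₁ := lt_of_le_of_ne har₁ (by
      intro h; rw [h] at hau''; linarith)
    -- u'' < 0 on (a, r₁]
    have hnegIoc : ∀ t ∈ Set.Ioc a r₁, u'' t < 0 := by
      intro t ht
      by_contra h
      push_neg at h
      have : t ∈ S := ⟨⟨ha0.trans ht.1.le, ht.2⟩, h⟩
      have := le_csSup hScomp.bddAbove this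
      exact absurd this (not_le.mpr ht.1)
    -- pick s ∈ Ioo a r₁ with u'' r₁ < u'' s
    have hcontA : ContinuousWithinAt u'' (Set.Icc 0 r₁) a :=
      (hu''c.mono hIccsub) a ⟨ha0, har₁⟩
    have hIoomem : Set.Ioo a r₁ ∈ 𝓝[>] a := Ioo_mem_nhdsGT_of_mem ⟨le_rfl, halt⟩
    have hIccmem : Set.Icc (0:ℝ) r₁ ∈ 𝓝[>] a :=
      Filter.mem_of_superset hIoomem (fun x hx => ⟨ha0.trans hx.1.le, hx.2.le⟩)
    have hle : 𝓝[>] a ≤ 𝓝[Set.Icc (0:ℝ) r₁] a := nhdsWithin_le_of_mem hIccmem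
    have hev : ∀ᶠ x in 𝓝[Set.Icc (0:ℝ) r₁] a, u'' r₁ < u'' x :=
      hcontA.eventually (eventually_gt_nhds (lt_of_lt_of_le hneg hau''))
    obtain ⟨s, hsgt, hsIoo⟩ := ((hev.filter_mono hle).and hIoomem).exists
    have hspos : 0 < s := lt_of_le_of_lt ha0 hsIoo.1
    have hsr₁ : s < r₁ := hsIoo.2
    have hsR : s < R := hsr₁.trans hr₁.2
    -- key inequalities
    have h1 : u s ≤ u r₁ := humono s r₁ hspos.le hsr₁ hr₁.2
    have h2 : u' r₁ ≤ u' s := by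
      obtain ⟨c, hc, hceq⟩ := mvt_u' s r₁ hspos.le hsr₁ hr₁.2
      have hcneg : u'' c < 0 := hnegIoc c ⟨hsIoo.1.trans hc.1, hc.2.le⟩
      rw [hceq] at hcneg
      rcases div_neg_iff.mp hcneg with ⟨h1, h2⟩ | ⟨h1, h2⟩ <;> linarith
    have hus0 : (0:ℝ) ≤ u s := hupos s ⟨hspos, hsR⟩
    have hur0 : (0:ℝ) ≤ u r₁ := hupos r₁ hr₁
    have hu's0 : (0:ℝ) ≤ u' s := (hu'pos s ⟨hspos, hsR⟩).le
    have hu'r0 : (0:ℝ) ≤ u' r₁ := (hu'pos r₁ hr₁).le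
    have h5 : f (u s) ≤ f (u r₁) := hfmono.monotoneOn hus0 hur0 h1
    have h6 : g (u' r₁) ≤ g (u' s) := hgmono.monotoneOn hu'r0 hu's0 h2
    have h7 : (N - 1) / r₁ * u' r₁ ≤ (N - 1) / s * u' s := by
      have hN1 : (0:ℝ) ≤ N - 1 := by linarith
      have : (N - 1) / r₁ ≤ (N - 1) / s :=
        div_le_div_of_nonneg_left hN1 hspos hsr₁.le
      have hd : (0:ℝ) ≤ (N - 1) / r₁ := div_nonneg hN1 hr₁.1.le
      nlinarith
    have he1 := heq s ⟨hspos, hsR⟩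
    have he2 := heq r₁ hr₁
    linarith
  refine ⟨part1, ?_⟩
  intro r hr
  obtain ⟨c, hc, hceq⟩ := mvt_u 0 r le_rfl hr.1 hr.2
  have hcR : c < R := hc.2.trans hr.2
  have hc0 : 0 < c := hc.1
  have hu'c : u' c ≤ u' r := by
    obtain ⟨d, hd, hdeq⟩ := mvt_u' c r hc0.le hc.2 hr.2
    have hd0 : 0 ≤ u'' d := part1 d ⟨hc0.trans hd.1, hd.2.trans hr.2⟩
    rw [hdeq] at hd0
    rcases div_nonneg_iff.mp hd0 with ⟨h1, h2⟩ | ⟨h1, h2⟩ <;> linarith [hd.1, hd.2]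
  have hur : u r = u 0 + u' c * r := by
    rw [sub_zero, eq_div_iff (by linarith [hr.1] : (r:ℝ) ≠ 0)] at hceq
    linarith
  have hu'r0 : 0 ≤ u' r := (hu'pos r hr).le
  have : u' c * r ≤ u' r * R := by
    have h1 : 0 ≤ u' c := hu'nn c ⟨hc0.le, hcR⟩
    nlinarith [hr.1, hr.2]
  rw [hur, hinit]
  linarith
end

section
/- Let u be a C² solution on (0,R) of u'' + ((N-1)/r) u' = f(u) + g(u') with u(0)=u₀>0, u'(0)=0, which satisfies u' > 0 and u'' ≥ 0 on (0,R). Then u''(r) ≥ (1/N)·(f(u(r)) + g(u'(r))) for all r ∈ (0,R). -/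
open MeasureTheory Filter
open Set

/-!
Since `f` and `g` are increasing and `u`, `u'` are nondecreasing, `F := f ∘ u + g ∘ u'` is
nondecreasing. The equation reads `(s ^ (N - 1) u')' = s ^ (N - 1) F(s)`, so comparing with
`s ^ (N - 1) F(r)` on `[0, r]` gives `r ^ (N - 1) u'(r) ≤ F(r) r ^ N / N`, i.e.
`u'(r) ≤ r F(r) / N`. Substituting this into `u'' = F - ((N - 1) / r) u'` gives the claim.
-/

theorem monotoneOn_Ico_of_hasDerivAt_nonneg {u u' : ℝ → ℝ} {a b : ℝ}
    (hu : ∀ x ∈ Ico a b, HasDerivAt u (u' x) x) (hu' : ∀ x ∈ Ioo a b, 0 ≤ u' x) :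
    MonotoneOn u (Ico a b) :=
  monotoneOn_of_hasDerivWithinAt_nonneg (convex_Ico a b)
    (fun x hx => (hu x hx).continuousAt.continuousWithinAt)
    (fun x hx => (hu x (interior_subset hx)).hasDerivWithinAt)
    (by rwa [interior_Ico])

theorem hasDerivAt_rpow_sub_one_mul {v : ℝ → ℝ} {v' N x : ℝ} (hx : 0 < x)
    (hv : HasDerivAt v v' x) :
    HasDerivAt (fun s => s ^ (N - 1) * v s) (x ^ (N - 1) * (v' + (N - 1) / x * v x)) x := by
  refine ((Real.hasDerivAt_rpow_const (Or.inl hx.ne')).mul hv).congr_deriv ?_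
  rw [Real.rpow_sub hx, Real.rpow_one]
  field_simp
  ring

theorem le_div_mul_of_radial_le {v v' : ℝ → ℝ} {N r M : ℝ} (hN : 1 ≤ N) (hr : 0 < r)
    (hvc : ContinuousOn v (Icc 0 r)) (hv : ∀ x ∈ Ioo 0 r, HasDerivAt v (v' x) x)
    (hv0 : v 0 = 0) (hle : ∀ x ∈ Ioo 0 r, v' x + (N - 1) / x * v x ≤ M) :
    v r ≤ M / N * r := by
  set ψ : ℝ → ℝ := fun s => M / N * s ^ N - s ^ (N - 1) * v s
  have hψ_deriv : ∀ x ∈ Ioo 0 r,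
      HasDerivAt ψ (x ^ (N - 1) * (M - (v' x + (N - 1) / x * v x))) x := by
    intro x hx
    refine (((Real.hasDerivAt_rpow_const (Or.inl hx.1.ne')).const_mul (M / N)).sub
      (hasDerivAt_rpow_sub_one_mul hx.1 (hv x hx))).congr_deriv ?_
    field_simp [(by linarith : N ≠ 0)]
  have hψc : ContinuousOn ψ (Icc 0 r) := by
    refine ContinuousOn.sub (fun s _ => ?_) (ContinuousOn.mul (fun s _ => ?_) hvc)
    · exact ((Real.continuousAt_rpow_const s N (Or.inr (by linarith))).const_mul _
        ).continuousWithinAt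
    · exact (Real.continuousAt_rpow_const s (N - 1) (Or.inr (by linarith))).continuousWithinAt
  have hψ_mono : MonotoneOn ψ (Icc 0 r) :=
    monotoneOn_of_hasDerivWithinAt_nonneg (convex_Icc 0 r) hψc
      (fun x hx => (hψ_deriv x (by rwa [interior_Icc] at hx)).hasDerivWithinAt)
      (fun x hx => by
        rw [interior_Icc] at hx
        exact mul_nonneg (Real.rpow_nonneg hx.1.le _) (sub_nonneg.2 (hle x hx)))
  have hψ0 : ψ 0 = 0 := by
    simp [ψ, Real.zero_rpow (by linarith : N ≠ 0), hv0]
  have hψr : 0 ≤ ψ r := hψ0 ▸ hψ_mono ⟨le_rfl, hr.le⟩ ⟨hr.le, le_rfl⟩ hr.le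
  have hrN : r ^ N = r ^ (N - 1) * r := by
    rw [← Real.rpow_add_one hr.ne', sub_add_cancel]
  refine le_of_mul_le_mul_left ?_ (Real.rpow_pos_of_pos hr (N - 1))
  simp only [ψ, hrN] at hψr
  linarith

theorem stmt_7_general (f g : ℝ → ℝ) (N : ℝ) (hN : 1 ≤ N)
    (hfmono : StrictMonoOn f (Set.Ici 0)) (hgmono : StrictMonoOn g (Set.Ici 0))
    (R u₀ : ℝ) (hR : 0 < R) (hu₀ : 0 < u₀)
    (u u' u'' : ℝ → ℝ)
    (hu' : ∀ r ∈ Set.Ico 0 R, HasDerivAt u (u' r) r)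
    (hu'' : ∀ r ∈ Set.Ico 0 R, HasDerivAt u' (u'' r) r)
    (heq : ∀ r ∈ Set.Ioo 0 R, u'' r + ((N - 1) / r) * u' r = f (u r) + g (u' r))
    (hinit : u 0 = u₀) (hinit' : u' 0 = 0)
    (hu'pos : ∀ r ∈ Set.Ioo 0 R, 0 < u' r)
    (hu''nonneg : ∀ r ∈ Set.Ioo 0 R, 0 ≤ u'' r) :
    ∀ r ∈ Set.Ioo 0 R, (1 / N) * (f (u r) + g (u' r)) ≤ u'' r := by
  intro r hr
  have h0 : (0 : ℝ) ∈ Ico 0 R := ⟨le_rfl, hR⟩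
  have hu_mono := monotoneOn_Ico_of_hasDerivAt_nonneg hu' fun s hs => (hu'pos s hs).le
  have hu'_mono := monotoneOn_Ico_of_hasDerivAt_nonneg hu'' hu''nonneg
  have hu_nonneg : MapsTo u (Ico 0 R) (Ici 0) := fun s hs =>
    (hinit ▸ hu₀.le).trans (hu_mono h0 hs hs.1)
  have hu'_nonneg : MapsTo u' (Ico 0 R) (Ici 0) := fun s hs =>
    hinit'.ge.trans (hu'_mono h0 hs hs.1)
  have hF_mono : MonotoneOn (fun s => f (u s) + g (u' s)) (Ico 0 R) :=
    (hfmono.monotoneOn.comp hu_mono hu_nonneg).add (hgmono.monotoneOn.comp hu'_mono hu'_nonneg)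
  have hIcc : Icc 0 r ⊆ Ico 0 R := Icc_subset_Ico_right hr.2
  have hbound : u' r ≤ (f (u r) + g (u' r)) / N * r :=
    le_div_mul_of_radial_le hN hr.1
      (fun s hs => (hu'' s (hIcc hs)).continuousAt.continuousWithinAt)
      (fun s hs => hu'' s (hIcc (Ioo_subset_Icc_self hs))) hinit'
      (fun s hs => by
        rw [heq s ⟨hs.1, hs.2.trans hr.2⟩]
        exact hF_mono (hIcc (Ioo_subset_Icc_self hs)) ⟨hr.1.le, hr.2⟩ hs.2.le)
  have hcoef : 0 ≤ (N - 1) / r := div_nonneg (by linarith) hr.1.le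
  have hid : (N - 1) / r * ((f (u r) + g (u' r)) / N * r)
      = f (u r) + g (u' r) - 1 / N * (f (u r) + g (u' r)) := by
    field_simp [hr.1.ne', (by linarith : N ≠ 0)]
  linarith [mul_le_mul_of_nonneg_left hbound hcoef, heq r hr]

/-- For a solution of `u'' + ((N-1)/r) u' = f(u) + g(u')` on `(0,R)` with
`u 0 = u₀ > 0`, `u' 0 = 0`, `u' > 0` and `u'' ≥ 0`, one has
`u'' r ≥ (1/N)(f(u r) + g(u' r))` on `(0,R)`. -/
theorem stmt_7 (f g : ℝ → ℝ) (N : ℝ) (hN : 1 ≤ N)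
    (hfc : ContinuousOn f (Set.Ici 0)) (hgc : ContinuousOn g (Set.Ici 0))
    (hfmono : StrictMonoOn f (Set.Ici 0)) (hgmono : StrictMonoOn g (Set.Ici 0))
    (hf0 : f 0 = 0) (hg0 : g 0 = 0)
    (R u₀ : ℝ) (hR : 0 < R) (hu₀ : 0 < u₀)
    (u u' u'' : ℝ → ℝ)
    (hu' : ∀ r ∈ Set.Ico 0 R, HasDerivAt u (u' r) r)
    (hu'' : ∀ r ∈ Set.Ico 0 R, HasDerivAt u' (u'' r) r)
    (hu''c : ContinuousOn u'' (Set.Ico 0 R))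
    (heq : ∀ r ∈ Set.Ioo 0 R, u'' r + ((N - 1) / r) * u' r = f (u r) + g (u' r))
    (hinit : u 0 = u₀) (hinit' : u' 0 = 0)
    (hu'pos : ∀ r ∈ Set.Ioo 0 R, 0 < u' r)
    (hu''nonneg : ∀ r ∈ Set.Ioo 0 R, 0 ≤ u'' r) :
    ∀ r ∈ Set.Ioo 0 R, (1 / N) * (f (u r) + g (u' r)) ≤ u'' r :=
  stmt_7_general f g N hN hfmono hgmono R u₀ hR hu₀ u u' u'' hu' hu'' heq hinit hinit' hu'pos
    hu''nonneg
end

section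
/- Let f be continuous increasing with f(0)=0, f>0 on (0,∞), F(t)=∫₀ᵗ f, and suppose ∫₁^∞ ds/√(F(s)) < ∞. Let u ∈ C²([0,∞)) satisfy u'' ≥ (1/N) f(u) on [0,∞), u(0)=u₀>0, u'(0)=0, u' ≥ 0. Then u cannot be defined on all of [0,∞); more precisely, there exists R < ∞ (depending only on u₀, N, f) such that if u is defined on [0,R'] with u' > 0 on (0,R'], then R' ≤ R. -/
/-
The energy `u'² - (2/N) F(u)` is nondecreasing (its derivative is `2u'(u'' - f(u)/N) ≥ 0`), so
`u' ≥ √(2/N) √(F(u) - F(u₀))`. Dividing by the square root and substituting `s = u(r)` gives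
`√(2/N) (R' - ε) ≤ ∫_{u(ε)}^{u(R')} ds / √(F(s) - F(u₀)) ≤ ∫_{u₀}^∞ ds / √(F(s) - F(u₀))`.
The last integral converges: near `u₀` because `F(s) - F(u₀) ≥ f(u₀)(s - u₀)`, and at infinity by
the Keller–Osserman condition, since `F(s) - F(u₀)` is bounded below by a multiple of `F(s)`.
-/

open MeasureTheory Filter intervalIntegral Set Topology

theorem ContinuousOn.intervalIntegrable_of_Ici {f : ℝ → ℝ} {c a b : ℝ}
    (hf : ContinuousOn f (Ici c)) (ha : c ≤ a) (hb : c ≤ b) : IntervalIntegrable f volume a b :=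
  (hf.mono fun _ hx => (le_min ha hb).trans hx.1).intervalIntegrable

theorem integrableOn_one_div_sqrt_of_mul_le {φ ψ : ℝ → ℝ} {S : Set ℝ} {c : ℝ}
    (hS : MeasurableSet S) (hc : 0 < c) (hφ : AEMeasurable φ (volume.restrict S))
    (hψ : IntegrableOn (fun s => 1 / √(ψ s)) S) (hψφ : ∀ s ∈ S, 0 < ψ s ∧ c * ψ s ≤ φ s) :
    IntegrableOn (fun s => 1 / √(φ s)) S := by
  refine (hψ.const_mul (1 / √c)).mono' (hφ.sqrt.const_div 1).aestronglyMeasurable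
    ((ae_restrict_iff' hS).2 (.of_forall fun s hs => ?_))
  obtain ⟨hψs, hle⟩ := hψφ s hs
  rw [Real.norm_of_nonneg (by positivity), one_div_mul_one_div, ← Real.sqrt_mul hc.le]
  exact one_div_le_one_div_of_le (by positivity) (Real.sqrt_le_sqrt hle)

theorem integrableOn_Ioc_one_div_sqrt_sub {a b : ℝ} (hab : a ≤ b) :
    IntegrableOn (fun s => 1 / √(s - a)) (Ioc a b) := by
  have h := (intervalIntegrable_rpow' (r := -(1 / 2)) (by norm_num) (a := 0)
    (b := b - a)).comp_sub_right a
  rw [zero_add, sub_add_cancel, intervalIntegrable_iff_integrableOn_Ioc_of_le hab] at h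
  refine h.congr_fun (fun s hs => ?_) measurableSet_Ioc
  dsimp only
  rw [Real.rpow_neg (sub_nonneg.2 hs.1.le), ← Real.sqrt_eq_rpow, one_div]

theorem integrableOn_Ioi_one_div_sqrt_sub {F : ℝ → ℝ} {a b m : ℝ} (hab : a < b) (hm : 0 < m)
    (hFc : ContinuousOn F (Ici a)) (hFmono : MonotoneOn F (Ici a)) (hFa : 0 ≤ F a)
    (hlin : ∀ s, a ≤ s → m * (s - a) ≤ F s - F a)
    (hint : IntegrableOn (fun s => 1 / √(F s)) (Ioi b)) :
    IntegrableOn (fun s => 1 / √(F s - F a)) (Ioi a) := by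
  have hmeas : ∀ S ⊆ Ici a, MeasurableSet S →
      AEMeasurable (fun s => F s - F a) (volume.restrict S) := fun S hS hSm =>
    ((hFc.mono hS).aestronglyMeasurable hSm).aemeasurable.sub_const _
  have hFab : F a < F b := by linarith [hlin b hab.le, mul_pos hm (sub_pos.2 hab)]
  rw [← Ioc_union_Ioi_eq_Ioi hab.le]
  refine (integrableOn_one_div_sqrt_of_mul_le measurableSet_Ioc hm
    (hmeas _ (Ioc_subset_Ioi_self.trans Ioi_subset_Ici_self) measurableSet_Ioc)
    (integrableOn_Ioc_one_div_sqrt_sub hab.le) fun s hs => ⟨sub_pos.2 hs.1, hlin s hs.1.le⟩).union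
    (integrableOn_one_div_sqrt_of_mul_le measurableSet_Ioi (c := (F b - F a) / F b) ?_
    (hmeas _ (Ioi_subset_Ici_self.trans (Ici_subset_Ici.2 hab.le)) measurableSet_Ioi) hint
    fun s hs => ?_)
  · exact div_pos (sub_pos.2 hFab) (hFa.trans_lt hFab)
  · have hFbs : F b ≤ F s := hFmono hab.le (hab.le.trans hs.le) hs.le
    have hFb : 0 < F b := hFa.trans_lt hFab
    refine ⟨hFb.trans_le hFbs, ?_⟩
    rw [div_mul_eq_mul_div, div_le_iff₀ hFb]
    nlinarith [mul_le_mul_of_nonneg_left hFbs hFa]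

section Primitive

variable {f F : ℝ → ℝ}

theorem sub_eq_integral_of_forall_eq_integral (hfc : ContinuousOn f (Ici 0))
    (hF : ∀ t, F t = ∫ s in (0:ℝ)..t, f s) {a b : ℝ} (ha : 0 ≤ a) (hb : 0 ≤ b) :
    F b - F a = ∫ s in a..b, f s := by
  rw [hF, hF, integral_interval_sub_left (hfc.intervalIntegrable_of_Ici le_rfl hb)
    (hfc.intervalIntegrable_of_Ici le_rfl ha)]

theorem hasDerivAt_of_forall_eq_integral (hfc : ContinuousOn f (Ici 0))
    (hF : ∀ t, F t = ∫ s in (0:ℝ)..t, f s) {t : ℝ} (ht : 0 < t) : HasDerivAt F (f t) t := by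
  have hfc' : ContinuousOn f (Ioi 0) := hfc.mono Ioi_subset_Ici_self
  rw [funext hF]
  exact integral_hasDerivAt_right (hfc.intervalIntegrable_of_Ici le_rfl ht.le)
    (hfc'.stronglyMeasurableAtFilter isOpen_Ioi t ht) (hfc'.continuousAt (Ioi_mem_nhds ht))

theorem mul_sub_le_sub_of_forall_eq_integral (hfc : ContinuousOn f (Ici 0))
    (hfmono : MonotoneOn f (Ici 0)) (hF : ∀ t, F t = ∫ s in (0:ℝ)..t, f s) {a b : ℝ}
    (ha : 0 ≤ a) (hab : a ≤ b) : f a * (b - a) ≤ F b - F a := by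
  rw [sub_eq_integral_of_forall_eq_integral hfc hF ha (ha.trans hab), mul_comm, ← smul_eq_mul,
    ← intervalIntegral.integral_const]
  exact integral_mono_on hab intervalIntegrable_const
    (hfc.intervalIntegrable_of_Ici ha (ha.trans hab)) fun x hx => hfmono ha (ha.trans hx.1) hx.1

theorem strictMonoOn_of_forall_eq_integral (hfc : ContinuousOn f (Ici 0))
    (hfpos : ∀ s, 0 < s → 0 < f s) (hF : ∀ t, F t = ∫ s in (0:ℝ)..t, f s) :
    StrictMonoOn F (Ici 0) := fun a ha b hb hab => by
  rw [← sub_pos, sub_eq_integral_of_forall_eq_integral hfc hF ha hb]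
  exact intervalIntegral_pos_of_pos_on (hfc.intervalIntegrable_of_Ici ha hb)
    (fun x hx => hfpos x (lt_of_le_of_lt ha hx.1)) hab

theorem continuousOn_one_div_sqrt_sub_of_forall_eq_integral (hfc : ContinuousOn f (Ici 0))
    (hfpos : ∀ s, 0 < s → 0 < f s) (hF : ∀ t, F t = ∫ s in (0:ℝ)..t, f s) {a : ℝ}
    (ha : 0 ≤ a) : ContinuousOn (fun s => 1 / √(F s - F a)) (Ioi a) := fun _ hs =>
  (continuousAt_const.div ((hasDerivAt_of_forall_eq_integral hfc hF
    (ha.trans_lt hs)).continuousAt.sub continuousAt_const).sqrt (Real.sqrt_pos.2 (sub_pos.2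
    (strictMonoOn_of_forall_eq_integral hfc hfpos hF ha (ha.trans hs.le) hs))).ne')
    |>.continuousWithinAt

theorem integrableOn_one_div_sqrt_sub_of_forall_eq_integral (hfc : ContinuousOn f (Ici 0))
    (hfmono : MonotoneOn f (Ici 0)) (hfpos : ∀ s, 0 < s → 0 < f s)
    (hF : ∀ t, F t = ∫ s in (0:ℝ)..t, f s)
    (hint : IntegrableOn (fun s => 1 / √(F s)) (Ici 1)) {a : ℝ} (ha : 0 < a) :
    IntegrableOn (fun s => 1 / √(F s - F a)) (Ioi a) := by
  have hFmono := (strictMonoOn_of_forall_eq_integral hfc hfpos hF).monotoneOn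
  refine integrableOn_Ioi_one_div_sqrt_sub (lt_add_one a) (hfpos a ha)
    (fun t ht => (hasDerivAt_of_forall_eq_integral hfc hF
      (ha.trans_le ht)).continuousAt.continuousWithinAt)
    (hFmono.mono (Ici_subset_Ici.2 ha.le)) ?_
    (fun s hs => mul_sub_le_sub_of_forall_eq_integral hfc hfmono hF ha.le hs)
    (hint.mono_set (Ioi_subset_Ici (by linarith)))
  simpa [hF 0] using hFmono self_mem_Ici ha.le ha.le

end Primitive

theorem monotoneOn_Icc_of_hasDerivAt_nonneg {φ φ' : ℝ → ℝ} {a b : ℝ}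
    (hφ : ∀ r ∈ Icc a b, HasDerivAt φ (φ' r) r) (hφ' : ∀ r ∈ Ioo a b, 0 ≤ φ' r) :
    MonotoneOn φ (Icc a b) :=
  monotoneOn_of_hasDerivWithinAt_nonneg (convex_Icc a b)
    (fun r hr => (hφ r hr).continuousAt.continuousWithinAt)
    (fun r hr => (hφ r (interior_subset hr)).hasDerivWithinAt) (by rwa [interior_Icc])

theorem strictMonoOn_Icc_of_hasDerivAt_pos {φ φ' : ℝ → ℝ} {a b : ℝ}
    (hφ : ∀ r ∈ Icc a b, HasDerivAt φ (φ' r) r) (hφ' : ∀ r ∈ Ioo a b, 0 < φ' r) :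
    StrictMonoOn φ (Icc a b) :=
  strictMonoOn_of_hasDerivWithinAt_pos (convex_Icc a b)
    (fun r hr => (hφ r hr).continuousAt.continuousWithinAt)
    (fun r hr => (hφ r (interior_subset hr)).hasDerivWithinAt) (by rwa [interior_Icc])

theorem monotoneOn_sq_sub_two_mul_comp {F f u u' u'' : ℝ → ℝ} {a b : ℝ}
    (hF : ∀ r ∈ Icc a b, HasDerivAt F (f (u r)) (u r))
    (hu : ∀ r ∈ Icc a b, HasDerivAt u (u' r) r) (hu' : ∀ r ∈ Icc a b, HasDerivAt u' (u'' r) r)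
    (hfu : ∀ r ∈ Ioo a b, f (u r) ≤ u'' r) (hu'_nonneg : ∀ r ∈ Ioo a b, 0 ≤ u' r) :
    MonotoneOn (fun r => u' r ^ 2 - 2 * F (u r)) (Icc a b) := by
  refine monotoneOn_Icc_of_hasDerivAt_nonneg
    (φ' := fun r => 2 * u' r * (u'' r - f (u r))) (fun r hr => ?_) fun r hr => ?_
  · exact (((hu' r hr).pow 2).sub (((hF r hr).comp r (hu r hr)).const_mul 2)).congr_deriv
      (by push_cast; ring)
  · exact mul_nonneg (mul_nonneg zero_le_two (hu'_nonneg r hr)) (sub_nonneg.2 (hfu r hr))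

theorem mul_sub_le_integral_of_le_comp_mul {u u' g : ℝ → ℝ} {a b k : ℝ} (hab : a ≤ b)
    (hu : ∀ r ∈ Icc a b, HasDerivAt u (u' r) r) (hu' : ContinuousOn u' (Icc a b))
    (hg : ContinuousOn g (u '' Icc a b)) (hk : ∀ r ∈ Icc a b, k ≤ g (u r) * u' r) :
    k * (b - a) ≤ ∫ s in u a..u b, g s := by
  rw [← uIcc_of_le hab] at hu hu' hg
  rw [← integral_comp_mul_deriv' hu hu' hg, mul_comm, ← smul_eq_mul,
    ← intervalIntegral.integral_const]
  rw [uIcc_of_le hab] at hu hu' hg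
  refine integral_mono_on hab intervalIntegrable_const ?_ hk
  exact ((hg.comp (fun r hr => (hu r hr).continuousAt.continuousWithinAt)
    (mapsTo_image u _)).mul hu').intervalIntegrable_of_Icc hab

theorem mul_le_setIntegral_Ioi_of_le_comp_mul {u u' g : ℝ → ℝ} {u₀ R k : ℝ} (hR : 0 < R)
    (hu : ∀ r ∈ Icc 0 R, HasDerivAt u (u' r) r) (hu' : ContinuousOn u' (Icc 0 R))
    (hu0 : u 0 = u₀) (humono : StrictMonoOn u (Icc 0 R))
    (hgc : ContinuousOn g (Ioi u₀)) (hgi : IntegrableOn g (Ioi u₀))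
    (hg : ∀ s ∈ Ioi u₀, 0 ≤ g s) (hk : ∀ r ∈ Ioc 0 R, k ≤ g (u r) * u' r) :
    k * R ≤ ∫ s in Ioi u₀, g s := by
  have hu_gt : ∀ r ∈ Ioc 0 R, u₀ < u r := fun r hr =>
    hu0 ▸ humono (left_mem_Icc.2 hR.le) (Ioc_subset_Icc_self hr) hr.1
  -- `g (u r)` may blow up as `r → 0`, so integrate over `[ε, R]` and let `ε → 0`.
  have hlim : Tendsto (fun ε => k * (R - ε)) (𝓝[>] 0) (𝓝 (k * R)) := by
    refine tendsto_nhdsWithin_of_tendsto_nhds ?_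
    simpa using ((continuous_const.sub continuous_id).const_mul k).tendsto (0 : ℝ)
  refine le_of_tendsto hlim ?_
  filter_upwards [Ioo_mem_nhdsGT hR] with ε hε
  have hsub : Icc ε R ⊆ Ioc 0 R := Icc_subset_Ioc hε.1 le_rfl
  calc k * (R - ε)
      ≤ ∫ s in u ε..u R, g s :=
        mul_sub_le_integral_of_le_comp_mul hε.2.le
          (fun r hr => hu r (Ioc_subset_Icc_self (hsub hr)))
          (hu'.mono (hsub.trans Ioc_subset_Icc_self))
          (hgc.mono (image_subset_iff.2 fun r hr => hu_gt r (hsub hr))) fun r hr => hk r (hsub hr)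
    _ = ∫ s in Ioc (u ε) (u R), g s := integral_of_le (humono.monotoneOn
          (Ioc_subset_Icc_self ⟨hε.1, hε.2.le⟩) (right_mem_Icc.2 hR.le) hε.2.le)
    _ ≤ ∫ s in Ioi u₀, g s := setIntegral_mono_set hgi
          ((ae_restrict_iff' measurableSet_Ioi).2 (.of_forall hg))
          (Ioc_subset_Ioi_self.trans (Ioi_subset_Ioi (hu_gt ε ⟨hε.1, hε.2.le⟩).le)).eventuallyLE

theorem sqrt_le_one_div_sqrt_mul_of_mul_le_sq {c D y : ℝ} (hD : 0 < D) (hy : 0 ≤ y)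
    (h : c * D ≤ y ^ 2) : √c ≤ 1 / √D * y := by
  rw [one_div_mul_eq_div, le_div_iff₀ (Real.sqrt_pos.2 hD), ← Real.sqrt_mul' c hD.le,
    ← Real.sqrt_sq hy]
  exact Real.sqrt_le_sqrt h

theorem stmt_8_general (f F : ℝ → ℝ)
    (hfc : ContinuousOn f (Set.Ici 0))
    (hfmono : StrictMonoOn f (Set.Ici 0))
    (hfpos : ∀ s, 0 < s → 0 < f s)
    (hF : ∀ t, F t = ∫ s in (0:ℝ)..t, f s)
    (hint : IntegrableOn (fun s => 1 / Real.sqrt (F s)) (Set.Ici 1))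
    (N u₀ : ℝ) (hN : 1 ≤ N) (hu₀ : 0 < u₀) :
    ∃ R : ℝ, ∀ (u u' u'' : ℝ → ℝ) (R' : ℝ), 0 < R' →
      (∀ r ∈ Set.Icc 0 R', HasDerivAt u (u' r) r) →
      (∀ r ∈ Set.Icc 0 R', HasDerivAt u' (u'' r) r) →
      ContinuousOn u'' (Set.Icc 0 R') →
      (∀ r ∈ Set.Icc 0 R', (1 / N) * f (u r) ≤ u'' r) →
      u 0 = u₀ → u' 0 = 0 →
      (∀ r ∈ Set.Icc 0 R', 0 ≤ u' r) →
      (∀ r ∈ Set.Ioc 0 R', 0 < u' r) →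
      R' ≤ R := by
  refine ⟨(∫ s in Ioi u₀, 1 / √(F s - F u₀)) / √(2 / N), ?_⟩
  intro u u' u'' R' hR' hu hu' _ hfu hu0 hu'0 hu'_nonneg hu'_pos
  have hu_strict : StrictMonoOn u (Icc 0 R') :=
    strictMonoOn_Icc_of_hasDerivAt_pos hu fun r hr => hu'_pos r (Ioo_subset_Ioc_self hr)
  have hu_ge : ∀ r ∈ Icc 0 R', u₀ ≤ u r := fun r hr =>
    hu0 ▸ hu_strict.monotoneOn (left_mem_Icc.2 hR'.le) hr hr.1
  have henergy := monotoneOn_sq_sub_two_mul_comp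
    (F := fun s => 1 / N * F s) (f := fun s => 1 / N * f s)
    (fun r hr => (hasDerivAt_of_forall_eq_integral hfc hF
      (hu₀.trans_le (hu_ge r hr))).const_mul (1 / N)) hu hu'
    (fun r hr => hfu r (Ioo_subset_Icc_self hr)) fun r hr => hu'_nonneg r (Ioo_subset_Icc_self hr)
  rw [le_div_iff₀' (Real.sqrt_pos.2 (by positivity))]
  refine mul_le_setIntegral_Ioi_of_le_comp_mul hR' hu
    (fun r hr => (hu' r hr).continuousAt.continuousWithinAt) hu0 hu_strict
    (continuousOn_one_div_sqrt_sub_of_forall_eq_integral hfc hfpos hF hu₀.le)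
    (integrableOn_one_div_sqrt_sub_of_forall_eq_integral hfc hfmono.monotoneOn hfpos hF hint hu₀)
    (fun _ _ => by positivity) fun r hr => ?_
  have hr' := Ioc_subset_Icc_self hr
  refine sqrt_le_one_div_sqrt_mul_of_mul_le_sq ?_ (hu'_nonneg r hr') ?_
  · exact sub_pos.2 (strictMonoOn_of_forall_eq_integral hfc hfpos hF hu₀.le
      (hu₀.le.trans (hu_ge r hr')) (hu0 ▸ hu_strict (left_mem_Icc.2 hR'.le) hr' hr.1))
  · have h := henergy (left_mem_Icc.2 hR'.le) hr' hr'.1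
    simp only [hu0, hu'0] at h
    linear_combination h

/-- Under the Keller–Osserman convergence `∫₁^∞ ds/√(F s) < ∞`, any function
with `u'' ≥ (1/N) f(u)`, `u 0 = u₀ > 0`, `u' 0 = 0`, `u' ≥ 0` cannot exist up to
an arbitrarily large `R'`: there is `R < ∞` depending only on `u₀, N, f`
bounding every such interval of existence. -/
theorem stmt_8 (f F : ℝ → ℝ)
    (hfc : ContinuousOn f (Set.Ici 0))
    (hfmono : StrictMonoOn f (Set.Ici 0))
    (hf0 : f 0 = 0)
    (hfpos : ∀ s, 0 < s → 0 < f s)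
    (hF : ∀ t, F t = ∫ s in (0:ℝ)..t, f s)
    (hint : IntegrableOn (fun s => 1 / Real.sqrt (F s)) (Set.Ici 1))
    (N u₀ : ℝ) (hN : 1 ≤ N) (hu₀ : 0 < u₀) :
    ∃ R : ℝ, ∀ (u u' u'' : ℝ → ℝ) (R' : ℝ), 0 < R' →
      (∀ r ∈ Set.Icc 0 R', HasDerivAt u (u' r) r) →
      (∀ r ∈ Set.Icc 0 R', HasDerivAt u' (u'' r) r) →
      ContinuousOn u'' (Set.Icc 0 R') →
      (∀ r ∈ Set.Icc 0 R', (1 / N) * f (u r) ≤ u'' r) →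
      u 0 = u₀ → u' 0 = 0 →
      (∀ r ∈ Set.Icc 0 R', 0 ≤ u' r) →
      (∀ r ∈ Set.Ioc 0 R', 0 < u' r) →
      R' ≤ R :=
  stmt_8_general f F hfc hfmono hfpos hF hint N u₀ hN hu₀
end

section
/- Let g be continuous increasing with g(0)=0, g>0 on (0,∞), and ∫₁^∞ ds/g(s) < ∞. Let u ∈ C² on [r₀, R') with u'(r₀) > 0 and u'' ≥ (1/N) g(u') there. Then R' ≤ r₀ + N·∫_{u'(r₀)}^∞ ds/g(s) < ∞. -/
/-!
Wherever `u' > 0` we have `u'' ≥ g(u')/N > 0`, so `u'` never drops below `a = u'(r₀)`.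
With `G(y) = ∫ₐʸ ds/g(s)`, the chain rule gives `(N·G(u'(r)))' = N·u''/g(u') ≥ 1`, hence
`r - r₀ ≤ N·G(u'(r)) ≤ N·∫ₐ^∞ ds/g(s)` for every `r < R'`.
-/

open MeasureTheory Filter Set

section ComparisonOnIco

variable {f f' B B' : ℝ → ℝ} {a b : ℝ}

lemma image_le_of_deriv_le_deriv_boundary_Ico
    (hf : ∀ x ∈ Ico a b, HasDerivAt f (f' x) x) (hB : ∀ x ∈ Ico a b, HasDerivAt B (B' x) x)
    (ha : f a ≤ B a) (bound : ∀ x ∈ Ico a b, f' x ≤ B' x) :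
    ∀ x ∈ Ico a b, f x ≤ B x := by
  intro x hx
  have hsub : Icc a x ⊆ Ico a b := Icc_subset_Ico_right hx.2
  have hsub' : Ico a x ⊆ Ico a b := Ico_subset_Icc_self.trans hsub
  exact image_le_of_deriv_right_le_deriv_boundary
    (fun y hy => (hf y (hsub hy)).continuousAt.continuousWithinAt)
    (fun y hy => (hf y (hsub' hy)).hasDerivWithinAt) ha
    (fun y hy => (hB y (hsub hy)).continuousAt.continuousWithinAt)
    (fun y hy => (hB y (hsub' hy)).hasDerivWithinAt)
    (fun y hy => bound y (hsub' hy)) ⟨hx.1, le_rfl⟩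

lemma le_image_Ico_of_deriv_pos_of_eq_left
    (hf : ∀ x ∈ Ico a b, HasDerivAt f (f' x) x) (hpos : ∀ x ∈ Ico a b, f x = f a → 0 < f' x) :
    ∀ x ∈ Ico a b, f a ≤ f x := by
  intro x hx
  have hsub : Icc a x ⊆ Ico a b := Icc_subset_Ico_right hx.2
  have hsub' : Ico a x ⊆ Ico a b := Ico_subset_Icc_self.trans hsub
  exact image_le_of_deriv_right_lt_deriv_boundary' continuousOn_const
    (fun y _ => hasDerivWithinAt_const y _ (f a)) le_rfl
    (fun y hy => (hf y (hsub hy)).continuousAt.continuousWithinAt)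
    (fun y hy => (hf y (hsub' hy)).hasDerivWithinAt)
    (fun y hy hy' => hpos y (hsub' hy) hy'.symm) ⟨hx.1, le_rfl⟩

end ComparisonOnIco

section IntegralOfContinuous

variable {h : ℝ → ℝ} {s : Set ℝ} {a y : ℝ}

lemma hasDerivAt_intervalIntegral_of_continuousOn (hh : ContinuousOn h s) (hs : IsOpen s)
    (hsub : uIcc a y ⊆ s) : HasDerivAt (fun z => ∫ t in a..z, h t) (h y) y := by
  have hy : y ∈ s := hsub right_mem_uIcc
  exact intervalIntegral.integral_hasDerivAt_right ((hh.mono hsub).intervalIntegrable)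
    (hh.stronglyMeasurableAtFilter hs y hy) (hh.continuousAt (hs.mem_nhds hy))

lemma integrableOn_Ioi_of_continuousOn_of_integrableOn_Ici {c : ℝ}
    (hh : ContinuousOn h (Icc a c)) (hint : IntegrableOn h (Ici c)) : IntegrableOn h (Ioi a) := by
  refine (hh.integrableOn_Icc.union hint).mono_set fun t ht => ?_
  rcases le_total t c with htc | hct
  · exact Or.inl ⟨le_of_lt ht, htc⟩
  · exact Or.inr hct

lemma intervalIntegral_le_setIntegral_Ioi (hy : a ≤ y) (hint : IntegrableOn h (Ioi a))
    (hnn : ∀ t ∈ Ioi a, 0 ≤ h t) : ∫ t in a..y, h t ≤ ∫ t in Ioi a, h t := by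
  rw [intervalIntegral.integral_of_le hy]
  exact setIntegral_mono_set hint ((ae_restrict_iff' measurableSet_Ioi).2 (ae_of_all _ hnn))
    Ioc_subset_Ioi_self.eventuallyLE

end IntegralOfContinuous

section DifferentialInequality

variable {g u' u'' : ℝ → ℝ} {N r₀ R' : ℝ}
  (hgpos : ∀ s, 0 < s → 0 < g s) (hN : 0 < N) (h0 : 0 < u' r₀)
  (hu'' : ∀ r ∈ Ico r₀ R', HasDerivAt u' (u'' r) r)
  (hineq : ∀ r ∈ Ico r₀ R', (1 / N) * g (u' r) ≤ u'' r)
include hgpos hN h0 hu'' hineq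

lemma le_apply_of_one_div_mul_le_deriv : ∀ r ∈ Ico r₀ R', u' r₀ ≤ u' r :=
  le_image_Ico_of_deriv_pos_of_eq_left hu'' fun r hr hr' =>
    (mul_pos (one_div_pos.2 hN) (hgpos _ (hr' ▸ h0))).trans_le (hineq r hr)

lemma sub_le_mul_integral_one_div_of_one_div_mul_le_deriv
    (hinv : ContinuousOn (fun s => 1 / g s) (Ioi 0)) :
    ∀ r ∈ Ico r₀ R', r - r₀ ≤ N * ∫ s in u' r₀..u' r, 1 / g s := by
  have ha_le := le_apply_of_one_div_mul_le_deriv hgpos hN h0 hu'' hineq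
  have hG : ∀ r ∈ Ico r₀ R', HasDerivAt (fun t => N * ∫ s in u' r₀..u' t, 1 / g s)
      (N * (1 / g (u' r) * u'' r)) r := by
    intro r hr
    have hpos : uIcc (u' r₀) (u' r) ⊆ Ioi 0 := by
      rw [uIcc_of_le (ha_le r hr)]
      exact fun s hs => h0.trans_le hs.1
    exact ((hasDerivAt_intervalIntegral_of_continuousOn hinv isOpen_Ioi hpos).comp r
      (hu'' r hr)).const_mul N
  refine image_le_of_deriv_le_deriv_boundary_Ico (fun r _ => (hasDerivAt_id r).sub_const r₀)
    hG (by simp) fun r hr => ?_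
  have hg : 0 < g (u' r) := hgpos _ (h0.trans_le (ha_le r hr))
  have hgN := hineq r hr
  rw [one_div_mul_eq_div, div_le_iff₀' hN] at hgN
  rwa [← mul_assoc, mul_one_div, div_mul_eq_mul_div, le_div_iff₀ hg, one_mul]

end DifferentialInequality

theorem stmt_9_general (g : ℝ → ℝ)
    (hgc : ContinuousOn g (Set.Ici 0))
    (hgpos : ∀ s, 0 < s → 0 < g s)
    (hint : IntegrableOn (fun s => 1 / g s) (Set.Ici 1))
    (N r₀ R' : ℝ) (hN : 1 ≤ N) (hr : r₀ < R')
    (u' u'' : ℝ → ℝ)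
    (hu'' : ∀ r ∈ Set.Ico r₀ R', HasDerivAt u' (u'' r) r)
    (h0 : 0 < u' r₀)
    (hineq : ∀ r ∈ Set.Ico r₀ R', (1 / N) * g (u' r) ≤ u'' r) :
    R' ≤ r₀ + N * ∫ s in Set.Ioi (u' r₀), 1 / g s := by
  have hN0 : 0 < N := zero_lt_one.trans_le hN
  have hinv : ContinuousOn (fun s => 1 / g s) (Ioi 0) :=
    continuousOn_const.div (hgc.mono Ioi_subset_Ici_self) fun s hs => (hgpos s hs).ne'
  have hI : IntegrableOn (fun s => 1 / g s) (Ioi (u' r₀)) :=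
    integrableOn_Ioi_of_continuousOn_of_integrableOn_Ici
      (hinv.mono fun s hs => h0.trans_le hs.1) hint
  refine le_of_forall_lt_imp_le_of_dense fun r hrR => ?_
  have hmem : max r r₀ ∈ Ico r₀ R' := ⟨le_max_right _ _, max_lt hrR hr⟩
  calc r ≤ max r r₀ := le_max_left _ _
    _ ≤ r₀ + N * ∫ s in u' r₀..u' (max r r₀), 1 / g s := by
      linarith [sub_le_mul_integral_one_div_of_one_div_mul_le_deriv hgpos hN0 h0 hu'' hineq
        hinv _ hmem]
    _ ≤ r₀ + N * ∫ s in Ioi (u' r₀), 1 / g s := by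
      gcongr
      exact intervalIntegral_le_setIntegral_Ioi
        (le_apply_of_one_div_mul_le_deriv hgpos hN0 h0 hu'' hineq _ hmem) hI
        fun s hs => (one_div_pos.2 (hgpos s (h0.trans hs))).le

/-- If `∫₁^∞ ds/g(s) < ∞` and `u'' ≥ (1/N) g(u')` on `[r₀, R')` with
`u'(r₀) > 0`, then `R' ≤ r₀ + N ∫_{u'(r₀)}^∞ ds/g(s)`. -/
theorem stmt_9 (g : ℝ → ℝ)
    (hgc : ContinuousOn g (Set.Ici 0))
    (hgmono : StrictMonoOn g (Set.Ici 0))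
    (hg0 : g 0 = 0)
    (hgpos : ∀ s, 0 < s → 0 < g s)
    (hint : IntegrableOn (fun s => 1 / g s) (Set.Ici 1))
    (N r₀ R' : ℝ) (hN : 1 ≤ N) (hr : r₀ < R')
    (u u' u'' : ℝ → ℝ)
    (hu' : ∀ r ∈ Set.Ico r₀ R', HasDerivAt u (u' r) r)
    (hu'' : ∀ r ∈ Set.Ico r₀ R', HasDerivAt u' (u'' r) r)
    (h0 : 0 < u' r₀)
    (hineq : ∀ r ∈ Set.Ico r₀ R', (1 / N) * g (u' r) ≤ u'' r) :
    R' ≤ r₀ + N * ∫ s in Set.Ioi (u' r₀), 1 / g s :=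
  stmt_9_general g hgc hgpos hint N r₀ R' hN hr u' u'' hu'' h0 hineq
end

section
/- With f, g, F, Γ, φ as in the previous construction (Γ(|φ'|) = F(φ), φ' < 0, φ(t) → ∞ as t → 0⁺), one has |φ'(t)|/φ(t) → ∞ as t → 0⁺. -/
/-!
Write `G = Γ⁻¹ ∘ F`. Since `Γ` is strictly increasing on `[0, ∞)`, the relation `Γ(|φ'|) = F(φ)`
says `|φ'(t)| = G(φ(t))`. `G` is increasing and `1 / G` is integrable at infinity, and a
nonincreasing integrable function `h` satisfies `s h(s) → 0` because `(s/2) h(s) ≤ ∫_{s/2}^s h`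
is a tail of a convergent integral. Hence `G(s)/s → ∞`, and composing with `φ(t) → ∞` gives the
claim.
-/

open MeasureTheory Filter intervalIntegral Set Topology

theorem tendsto_mul_self_zero_of_antitoneOn_integrableOn {h : ℝ → ℝ} {a : ℝ}
    (hnonneg : ∀ s ∈ Ici a, 0 ≤ h s) (hanti : AntitoneOn h (Ici a))
    (hint : IntegrableOn h (Ici a)) :
    Tendsto (fun s => s * h s) atTop (𝓝 0) := by
  have hii : ∀ b c, a ≤ b → b ≤ c → IntervalIntegrable h volume b c := fun b c hb hbc =>
    (hint.mono_set fun x hx => hb.trans (uIcc_of_le hbc ▸ hx).1).intervalIntegrable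
  have hlim : Tendsto (fun s => ∫ x in a..s, h x) atTop (𝓝 (∫ x in Ioi a, h x)) :=
    intervalIntegral_tendsto_integral_Ioi a (hint.mono_set Ioi_subset_Ici_self) tendsto_id
  have hlarge : ∀ᶠ s in atTop, a ≤ s / 2 ∧ s / 2 ≤ s := by
    filter_upwards [eventually_ge_atTop (2 * |a|)] with s hs
    constructor <;> linarith [le_abs_self a, abs_nonneg a]
  have htail : Tendsto (fun s => ∫ x in (s / 2)..s, h x) atTop (𝓝 0) := by
    have := hlim.sub (hlim.comp (tendsto_id.atTop_div_const two_pos))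
    rw [sub_self] at this
    refine this.congr' ?_
    filter_upwards [hlarge] with s ⟨hs2, hle⟩
    exact integral_interval_sub_left (hii a s le_rfl (hs2.trans hle)) (hii a (s / 2) le_rfl hs2)
  have hhalf : Tendsto (fun s => s / 2 * h s) atTop (𝓝 0) := by
    refine squeeze_zero' ?_ ?_ htail
    · filter_upwards [hlarge] with s ⟨hs2, hle⟩
      exact mul_nonneg (by linarith) (hnonneg s (hs2.trans hle))
    · filter_upwards [hlarge] with s ⟨hs2, hle⟩
      calc s / 2 * h s = ∫ _ in (s / 2)..s, h s := by
            rw [intervalIntegral.integral_const, smul_eq_mul]; ring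
        _ ≤ ∫ x in (s / 2)..s, h x :=
          integral_mono_on hle intervalIntegrable_const (hii _ _ hs2 hle)
            fun x hx => hanti (hs2.trans hx.1) (hs2.trans hle) hx.2
  simpa [← mul_assoc, mul_div_cancel₀] using hhalf.const_mul 2

theorem tendsto_div_self_atTop_of_integrableOn_inv {G : ℝ → ℝ} {a : ℝ}
    (hpos : ∀ s ∈ Ici a, 0 < G s) (hmono : MonotoneOn G (Ici a))
    (hint : IntegrableOn (fun s => 1 / G s) (Ici a)) :
    Tendsto (fun s => G s / s) atTop atTop := by
  have hzero : Tendsto (fun s => s * (1 / G s)) atTop (𝓝[>] 0) := by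
    refine tendsto_nhdsWithin_of_tendsto_nhds_of_eventually_within _
      (tendsto_mul_self_zero_of_antitoneOn_integrableOn (fun s hs => (one_div_pos.2 (hpos s hs)).le)
        (fun x hx y hy hxy => one_div_le_one_div_of_le (hpos x hx) (hmono hx hy hxy)) hint) ?_
    filter_upwards [eventually_ge_atTop a, eventually_gt_atTop 0] with s hs hs'
    exact mul_pos hs' (one_div_pos.2 (hpos s hs))
  refine hzero.inv_tendsto_nhdsGT_zero.congr fun s => ?_
  simp only [Pi.inv_apply, mul_one_div, inv_div]

theorem strictMonoOn_integral_of_pos {f : ℝ → ℝ} {a : ℝ} (hf : ContinuousOn f (Ici a))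
    (hpos : ∀ x, a < x → 0 < f x) : StrictMonoOn (fun t => ∫ s in a..t, f s) (Ici a) := by
  have hii : ∀ b c, a ≤ b → b ≤ c → IntervalIntegrable f volume b c := fun b c hb hbc =>
    (hf.mono fun x hx => hb.trans (uIcc_of_le hbc ▸ hx).1).intervalIntegrable
  intro x hx y hy hxy
  rw [← sub_pos, integral_interval_sub_left (hii a y le_rfl hy) (hii a x le_rfl hx)]
  exact intervalIntegral_pos_of_pos_on (hii x y hx hxy.le)
    (fun z hz => hpos z (lt_of_le_of_lt hx hz.1)) hxy

theorem stmt_17_general (f g : ℝ → ℝ) (N : ℝ) (hN : 1 ≤ N)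
    (hfc : ContinuousOn f (Set.Ici 0)) (hgc : ContinuousOn g (Set.Ici 0))
    (hfpos : ∀ s, 0 < s → 0 < f s) (hgpos : ∀ s, 0 < s → 0 < g s)
    (F Γ Γinv : ℝ → ℝ)
    (hF : ∀ t, F t = ∫ s in (0:ℝ)..t, f s)
    (hΓ : ∀ s, Γ s = (∫ t in (0:ℝ)..(2 * s), g t) + 2 * N * s ^ 2)
    (hΓinv : ∀ s, 0 ≤ s → 0 ≤ Γinv s ∧ Γ (Γinv s) = s)
    (hint : IntegrableOn (fun s => 1 / Γinv (F s)) (Set.Ici 1))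
    (T : ℝ) (hT : 0 < T) (φ φ' : ℝ → ℝ)
    (hrel : ∀ t ∈ Set.Ioc 0 T, Γ (|φ' t|) = F (φ t))
    (hblow : Tendsto φ (nhdsWithin 0 (Set.Ioi 0)) atTop) :
    Tendsto (fun t => |φ' t| / φ t) (nhdsWithin 0 (Set.Ioi 0)) atTop := by
  have hFmono : StrictMonoOn F (Ici 0) := by
    simpa only [← funext hF] using strictMonoOn_integral_of_pos hfc hfpos
  have hΓmono : StrictMonoOn Γ (Ici 0) := by
    intro x (hx : 0 ≤ x) y (hy : 0 ≤ y) hxy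
    have hint_lt := strictMonoOn_integral_of_pos hgc hgpos
      (show 0 ≤ 2 * x by positivity) (show 0 ≤ 2 * y by positivity) (by linarith)
    rw [hΓ, hΓ]
    have : x ^ 2 ≤ y ^ 2 := pow_le_pow_left₀ hx hxy.le 2
    nlinarith
  have hFpos : ∀ s ∈ Ici (1 : ℝ), 0 < F s := fun s (hs : 1 ≤ s) => by
    simpa [hF] using hFmono (le_refl (0 : ℝ)) (show (0 : ℝ) ≤ s by linarith) (by linarith)
  have hGpos : ∀ s ∈ Ici (1 : ℝ), 0 < Γinv (F s) := fun s hs => by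
    obtain ⟨hnonneg, hinv⟩ := hΓinv _ (hFpos s hs).le
    refine hnonneg.lt_of_ne fun h0 => (hFpos s hs).ne' ?_
    rw [← hinv, ← h0, hΓ]
    simp
  have hGmono : MonotoneOn (fun s => Γinv (F s)) (Ici 1) := fun x hx y hy hxy => by
    obtain ⟨hx0, hxinv⟩ := hΓinv _ (hFpos x hx).le
    obtain ⟨hy0, hyinv⟩ := hΓinv _ (hFpos y hy).le
    rw [← hΓmono.le_iff_le hx0 hy0, hxinv, hyinv]
    exact hFmono.monotoneOn (mem_Ici.2 (zero_le_one.trans hx)) (mem_Ici.2 (zero_le_one.trans hy)) hxy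
  refine (tendsto_div_self_atTop_of_integrableOn_inv hGpos hGmono hint).comp hblow |>.congr' ?_
  filter_upwards [Ioc_mem_nhdsGT hT, hblow.eventually_ge_atTop 1] with t ht hφt
  obtain ⟨hG0, hGinv⟩ := hΓinv _ (hFpos _ hφt).le
  have : Γinv (F (φ t)) = |φ' t| :=
    hΓmono.injOn hG0 (abs_nonneg (φ' t)) (hGinv.trans (hrel t ht).symm)
  simp only [Function.comp, this]

/-- With `φ` as constructed (`Γ(|φ'|) = F(φ)`, `φ' < 0`, `φ(t) → ∞` as
`t → 0⁺`), one has `|φ' t| / φ t → ∞` as `t → 0⁺`. -/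
theorem stmt_17 (f g : ℝ → ℝ) (N : ℝ) (hN : 1 ≤ N)
    (hfc : ContinuousOn f (Set.Ici 0)) (hgc : ContinuousOn g (Set.Ici 0))
    (hfmono : StrictMonoOn f (Set.Ici 0)) (hgmono : StrictMonoOn g (Set.Ici 0))
    (hf0 : f 0 = 0) (hg0 : g 0 = 0)
    (hfpos : ∀ s, 0 < s → 0 < f s) (hgpos : ∀ s, 0 < s → 0 < g s)
    (F Γ Γinv : ℝ → ℝ)
    (hF : ∀ t, F t = ∫ s in (0:ℝ)..t, f s)
    (hΓ : ∀ s, Γ s = (∫ t in (0:ℝ)..(2 * s), g t) + 2 * N * s ^ 2)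
    (hΓinv : ∀ s, 0 ≤ s → 0 ≤ Γinv s ∧ Γ (Γinv s) = s)
    (hint : IntegrableOn (fun s => 1 / Γinv (F s)) (Set.Ici 1))
    (T : ℝ) (hT : 0 < T) (φ φ' : ℝ → ℝ)
    (hφpos : ∀ t ∈ Set.Ioc 0 T, 0 < φ t)
    (hφ'neg : ∀ t ∈ Set.Ioc 0 T, φ' t < 0)
    (hrel : ∀ t ∈ Set.Ioc 0 T, Γ (|φ' t|) = F (φ t))
    (hblow : Tendsto φ (nhdsWithin 0 (Set.Ioi 0)) atTop) :
    Tendsto (fun t => |φ' t| / φ t) (nhdsWithin 0 (Set.Ioi 0)) atTop :=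
  stmt_17_general f g N hN hfc hgc hfpos hgpos F Γ Γinv hF hΓ hΓinv hint T hT φ φ' hrel hblow
end

section
/- Let f, g, F, Γ, φ as above, with Γ(|φ'|) = F(φ), φ' < 0. Suppose additionally t is restricted so that φ(t) ≤ |φ'(t)|/2. Then g(|φ'(t)|) + 2N|φ'(t)| ≤ (1/2) f(φ(t)). -/
open MeasureTheory Filter intervalIntegral

/-- With `Γ(|φ' t|) = F(φ t)`, `φ' t < 0`, and `φ t ≤ |φ' t| / 2`, one has
`g(|φ' t|) + 2N |φ' t| ≤ (1/2) f(φ t)`. -/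
theorem stmt_18 (f g : ℝ → ℝ) (N : ℝ) (hN : 1 ≤ N)
    (hfc : ContinuousOn f (Set.Ici 0)) (hgc : ContinuousOn g (Set.Ici 0))
    (hfmono : StrictMonoOn f (Set.Ici 0)) (hgmono : StrictMonoOn g (Set.Ici 0))
    (hf0 : f 0 = 0) (hg0 : g 0 = 0)
    (hfpos : ∀ s, 0 < s → 0 < f s) (hgpos : ∀ s, 0 < s → 0 < g s)
    (F Γ : ℝ → ℝ)
    (hF : ∀ t, F t = ∫ s in (0:ℝ)..t, f s)
    (hΓ : ∀ s, Γ s = (∫ t in (0:ℝ)..(2 * s), g t) + 2 * N * s ^ 2)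
    (φ φ' : ℝ → ℝ) (t : ℝ)
    (hφpos : 0 < φ t)
    (hφ'neg : φ' t < 0)
    (hrel : Γ (|φ' t|) = F (φ t))
    (hhalf : φ t ≤ |φ' t| / 2) :
    g (|φ' t|) + 2 * N * |φ' t| ≤ (1 / 2) * f (φ t) := by
  set a := |φ' t| with ha
  set p := φ t with hp
  have hapos : 0 < a := abs_pos.mpr hφ'neg.ne
  have hmono : MonotoneOn f (Set.Ici 0) := hfmono.monotoneOn
  have hgm : MonotoneOn g (Set.Ici 0) := hgmono.monotoneOn
  -- F p ≤ p * f p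
  have hsubf : Set.uIcc (0:ℝ) p ⊆ Set.Ici 0 := by
    rw [Set.uIcc_of_le hφpos.le]; exact fun x hx => hx.1
  have hintf : IntervalIntegrable f volume 0 p :=
    (hfc.mono hsubf).intervalIntegrable
  have hFle : F p ≤ p * f p := by
    rw [hF]
    calc (∫ s in (0:ℝ)..p, f s) ≤ ∫ _ in (0:ℝ)..p, f p := by
          apply intervalIntegral.integral_mono_on hφpos.le hintf
            intervalIntegrable_const
          intro x hx
          exact hmono hx.1 (hx.1.trans hx.2) hx.2
      _ = p * f p := by simp [mul_comm]
  -- Γ a ≥ a * g a + 2 N a ^ 2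
  have hsub1 : Set.uIcc (0:ℝ) a ⊆ Set.Ici 0 := by
    rw [Set.uIcc_of_le hapos.le]; exact fun x hx => hx.1
  have hsub2 : Set.uIcc a (2 * a) ⊆ Set.Ici 0 := by
    rw [Set.uIcc_of_le (by linarith)]; exact fun x hx => hapos.le.trans hx.1
  have hint1 : IntervalIntegrable g volume 0 a :=
    (hgc.mono hsub1).intervalIntegrable
  have hint2 : IntervalIntegrable g volume a (2 * a) :=
    (hgc.mono hsub2).intervalIntegrable
  have hΓge : a * g a + 2 * N * a ^ 2 ≤ Γ a := by
    rw [hΓ]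
    have hsplit : (∫ s in (0:ℝ)..(2 * a), g s)
        = (∫ s in (0:ℝ)..a, g s) + ∫ s in a..(2 * a), g s :=
      (intervalIntegral.integral_add_adjacent_intervals hint1 hint2).symm
    have h1 : 0 ≤ ∫ s in (0:ℝ)..a, g s := by
      apply intervalIntegral.integral_nonneg hapos.le
      intro x hx
      rcases eq_or_lt_of_le hx.1 with h | h
      · simp [← h, hg0]
      · exact (hgpos x h).le
    have h2 : a * g a ≤ ∫ s in a..(2 * a), g s := by
      calc a * g a = ∫ _ in a..(2 * a), g a := by
            rw [intervalIntegral.integral_const, smul_eq_mul]; ring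
        _ ≤ ∫ s in a..(2 * a), g s := by
            apply intervalIntegral.integral_mono_on (by linarith)
              intervalIntegrable_const hint2
            intro x hx
            exact hgm (Set.mem_Ici.mpr hapos.le) (Set.mem_Ici.mpr (hapos.le.trans hx.1)) hx.1
    nlinarith
  -- combine
  have hfppos : 0 < f p := hfpos p hφpos
  have key : a * g a + 2 * N * a ^ 2 ≤ (a / 2) * f p := by
    calc a * g a + 2 * N * a ^ 2 ≤ Γ a := hΓge
      _ = F p := hrel
      _ ≤ p * f p := hFle
      _ ≤ (a / 2) * f p := by nlinarith
  nlinarith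
end

section
/- Let f, g, F, Γ, φ be as above with Γ(|φ'|) = F(φ) and φ' < 0 on (0, T]. Then φ is twice differentiable with φ''(t) = f(φ(t))·|φ'(t)| / (2 g(2|φ'(t)|) + 4N|φ'(t)|) wherever g(2|φ'|) + 2N|φ'| > 0; in particular φ'' > 0 and φ'' ≤ f(φ)/(4N). -/
open MeasureTheory Filter intervalIntegral
open scoped Topology

/-!
Since `Γ'(s) = 2 g(2s) + 4Ns > 0` for `s > 0` and `Γ'` is continuous there, the inverse function
theorem gives a differentiable local inverse of `Γ` near `|φ'(t₀)|`. Hence `|φ'| = Γ⁻¹ ∘ F ∘ φ`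
near `t₀` is differentiable, with derivative `f(φ) φ' / Γ'(|φ'|)`, and `φ' = -|φ'|` yields the
formula; dropping `2 g(2|φ'|) ≥ 0` from the denominator gives the upper bound.
-/

theorem HasStrictDerivAt.hasDerivAt_of_comp_eventuallyEq {𝕜 : Type*} [NontriviallyNormedField 𝕜]
    [CompleteSpace 𝕜] {Γ u ψ : 𝕜 → 𝕜} {D ψ' t₀ : 𝕜} (hΓ : HasStrictDerivAt Γ D (u t₀))
    (hD : D ≠ 0) (hu : ContinuousAt u t₀) (hψ : HasDerivAt ψ ψ' t₀)
    (hrel : ∀ᶠ t in 𝓝 t₀, Γ (u t) = ψ t) : HasDerivAt u (D⁻¹ * ψ') t₀ := by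
  set G := hΓ.localInverse Γ D (u t₀) hD
  have hψt₀ : Γ (u t₀) = ψ t₀ := hrel.self_of_nhds
  have hG : HasDerivAt G D⁻¹ (ψ t₀) := hψt₀ ▸ (hΓ.to_localInverse hD).hasDerivAt
  have hu_eq : ∀ᶠ t in 𝓝 t₀, u t = G (ψ t) := by
    filter_upwards [hu.eventually (hΓ.eventually_left_inverse hD), hrel] with t hleft ht
    rw [← ht]
    exact hleft.symm
  exact (hG.comp t₀ hψ).congr_of_eventuallyEq hu_eq

theorem hasStrictDerivAt_integral_of_continuousOn_Ici {g : ℝ → ℝ} {a x : ℝ}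
    (hgc : ContinuousOn g (Set.Ici a)) (hx : a < x) :
    HasStrictDerivAt (fun u => ∫ t in a..u, g t) (g x) x := by
  refine integral_hasStrictDerivAt_right ?_ ?_ (hgc.continuousAt (Ici_mem_nhds hx))
  · refine (hgc.mono ?_).intervalIntegrable
    rw [Set.uIcc_of_le hx.le]
    exact Set.Icc_subset_Ici_self
  · exact ContinuousAt.stronglyMeasurableAtFilter isOpen_Ioi
      (fun y hy => hgc.continuousAt (Ici_mem_nhds hy)) x hx

theorem hasStrictDerivAt_integral_two_mul_add_sq {g : ℝ → ℝ}
    (hgc : ContinuousOn g (Set.Ici 0)) (N : ℝ) {s : ℝ} (hs : 0 < s) :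
    HasStrictDerivAt (fun s => (∫ t in (0:ℝ)..(2 * s), g t) + 2 * N * s ^ 2)
      (2 * g (2 * s) + 4 * N * s) s := by
  have hprim := hasStrictDerivAt_integral_of_continuousOn_Ici hgc (by positivity : 0 < 2 * s)
  have hlin : HasStrictDerivAt (fun u : ℝ => 2 * u) 2 s := by
    simpa using (hasStrictDerivAt_id s).const_mul 2
  have hsq := (hasStrictDerivAt_pow 2 s).const_mul (2 * N)
  exact ((hprim.comp s hlin).add hsq).congr_deriv (by push_cast; ring)

theorem stmt_19_general (f g : ℝ → ℝ) (N : ℝ) (hN : 1 ≤ N)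
    (hfc : ContinuousOn f (Set.Ici 0)) (hgc : ContinuousOn g (Set.Ici 0))
    (hfpos : ∀ s, 0 < s → 0 < f s) (hgpos : ∀ s, 0 < s → 0 < g s)
    (F Γ : ℝ → ℝ)
    (hF : ∀ t, F t = ∫ s in (0:ℝ)..t, f s)
    (hΓ : ∀ s, Γ s = (∫ t in (0:ℝ)..(2 * s), g t) + 2 * N * s ^ 2)
    (T : ℝ) (φ φ' : ℝ → ℝ)
    (hφd : ∀ t ∈ Set.Ioc 0 T, HasDerivAt φ (φ' t) t)
    (hφ'c : ContinuousOn φ' (Set.Ioc 0 T))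
    (hφpos : ∀ t ∈ Set.Ioc 0 T, 0 < φ t)
    (hφ'neg : ∀ t ∈ Set.Ioc 0 T, φ' t < 0)
    (hrel : ∀ t ∈ Set.Ioc 0 T, Γ (|φ' t|) = F (φ t)) :
    ∀ t ∈ Set.Ioo 0 T, ∃ d : ℝ,
      HasDerivAt φ' d t ∧
      d = f (φ t) * |φ' t| / (2 * g (2 * |φ' t|) + 4 * N * |φ' t|) ∧
      0 < d ∧ d ≤ f (φ t) / (4 * N) := by
  intro t₀ ht₀
  have hnhds : Set.Ioc 0 T ∈ 𝓝 t₀ :=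
    mem_of_superset (Ioo_mem_nhds ht₀.1 ht₀.2) Set.Ioo_subset_Ioc_self
  have ht₀' : t₀ ∈ Set.Ioc 0 T := mem_of_mem_nhds hnhds
  set u₀ := |φ' t₀|
  set D := 2 * g (2 * u₀) + 4 * N * u₀
  have hu₀ : 0 < u₀ := abs_pos.2 (hφ'neg t₀ ht₀').ne
  have hg : 0 < g (2 * u₀) := hgpos _ (by positivity)
  have hfφ : 0 < f (φ t₀) := hfpos _ (hφpos t₀ ht₀')
  have hN₀ : 0 < N := by linarith
  have hD : 0 < D := by positivity
  have hΓ' : HasStrictDerivAt Γ D u₀ :=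
    funext hΓ ▸ hasStrictDerivAt_integral_two_mul_add_sq hgc N hu₀
  have hFφ : HasDerivAt (fun t => F (φ t)) (f (φ t₀) * φ' t₀) t₀ :=
    (funext hF ▸ hasStrictDerivAt_integral_of_continuousOn_Ici hfc
      (hφpos t₀ ht₀')).hasDerivAt.comp t₀ (hφd t₀ ht₀')
  have habs : HasDerivAt (fun t => |φ' t|) (D⁻¹ * (f (φ t₀) * φ' t₀)) t₀ :=
    hΓ'.hasDerivAt_of_comp_eventuallyEq (u := fun t => |φ' t|) hD.ne'
      (hφ'c.continuousAt hnhds).abs hFφ (eventually_of_mem hnhds hrel)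
  have hφ'_eq : ∀ t ∈ Set.Ioc 0 T, φ' t = -|φ' t| := fun t ht => by
    simp [abs_of_neg (hφ'neg t ht)]
  have hd : -(D⁻¹ * (f (φ t₀) * φ' t₀)) = f (φ t₀) * u₀ / D := by
    rw [show φ' t₀ = -u₀ from hφ'_eq t₀ ht₀']
    field_simp
  refine ⟨_, habs.neg.congr_of_eventuallyEq (eventually_of_mem hnhds hφ'_eq), hd,
    hd ▸ by positivity, hd ▸ ?_⟩
  rw [div_le_div_iff₀ hD (by positivity)]
  nlinarith [mul_pos hfφ hg]

/-- With `Γ(|φ'|) = F(φ)` and `φ' < 0` on `(0,T]`, the function `φ` is twice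
differentiable, with `φ'' = f(φ)|φ'| / (2 g(2|φ'|) + 4N|φ'|)`; in particular
`φ'' > 0` and `φ'' ≤ f(φ)/(4N)`. -/
theorem stmt_19 (f g : ℝ → ℝ) (N : ℝ) (hN : 1 ≤ N)
    (hfc : ContinuousOn f (Set.Ici 0)) (hgc : ContinuousOn g (Set.Ici 0))
    (hfmono : StrictMonoOn f (Set.Ici 0)) (hgmono : StrictMonoOn g (Set.Ici 0))
    (hf0 : f 0 = 0) (hg0 : g 0 = 0)
    (hfpos : ∀ s, 0 < s → 0 < f s) (hgpos : ∀ s, 0 < s → 0 < g s)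
    (F Γ : ℝ → ℝ)
    (hF : ∀ t, F t = ∫ s in (0:ℝ)..t, f s)
    (hΓ : ∀ s, Γ s = (∫ t in (0:ℝ)..(2 * s), g t) + 2 * N * s ^ 2)
    (T : ℝ) (hT : 0 < T) (φ φ' : ℝ → ℝ)
    (hφd : ∀ t ∈ Set.Ioc 0 T, HasDerivAt φ (φ' t) t)
    (hφ'c : ContinuousOn φ' (Set.Ioc 0 T))
    (hφpos : ∀ t ∈ Set.Ioc 0 T, 0 < φ t)
    (hφ'neg : ∀ t ∈ Set.Ioc 0 T, φ' t < 0)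
    (hrel : ∀ t ∈ Set.Ioc 0 T, Γ (|φ' t|) = F (φ t)) :
    ∀ t ∈ Set.Ioo 0 T, ∃ d : ℝ,
      HasDerivAt φ' d t ∧
      d = f (φ t) * |φ' t| / (2 * g (2 * |φ' t|) + 4 * N * |φ' t|) ∧
      0 < d ∧ d ≤ f (φ t) / (4 * N) :=
  stmt_19_general f g N hN hfc hgc hfpos hgpos F Γ hF hΓ T φ φ' hφd hφ'c hφpos hφ'neg hrel
end
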